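/- arXiv:1501.05668 — 7 statements merged into one kernel-verified Lean document; each statement's English description precedes it below -/
import Mathlib

section
/- The function F : (1,∞) → ℝ defined by F(θ) = 2√(θ²−1) / ( π(θ − √(θ²−1)) + 2θ·arctan(1/√(θ²−1)) ) is strictly increasing on (1,∞) and maps (1,∞) bijectively onto (0,∞). -/
/-!
Substituting `u = 1/√(θ²−1)`, which maps `(1,∞)` decreasingly onto `(0,∞)`, turns `F θ` into
`1 / G u` with `G u = (π/2)(√(1+u²) − 1) + √(1+u²)·arctan u`. The function `G` is continuous and
strictly increasing on `[0,∞)`, vanishes at `0` and grows at least like `u − 1`, so it maps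
`(0,∞)` increasingly onto itself. Composing with `u ↦ u⁻¹` gives the claim.
-/

/-- The explicit formula relating the renormalized dissipative scale `λ` to the
renormalized yield shear stress `θ_Y`:
`F(θ) = 2√(θ²−1) / (π(θ − √(θ²−1)) + 2θ·arctan(1/√(θ²−1)))`. -/
noncomputable def F (θ : ℝ) : ℝ :=
  2 * Real.sqrt (θ ^ 2 - 1) /
    (Real.pi * (θ - Real.sqrt (θ ^ 2 - 1)) +
      2 * θ * Real.arctan (1 / Real.sqrt (θ ^ 2 - 1)))

open Real Set Filter

lemma bijOn_inv_Ioi_zero {α : Type*} [Field α] [LinearOrder α] [IsStrictOrderedRing α] :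
    BijOn (fun x : α ↦ x⁻¹) (Ioi 0) (Ioi 0) :=
  ⟨fun _ hx ↦ inv_pos.2 hx, inv_injective.injOn,
    fun y hy ↦ ⟨y⁻¹, inv_pos.2 hy, inv_inv y⟩⟩

noncomputable def invSqrtSqSubOne (θ : ℝ) : ℝ := 1 / √(θ ^ 2 - 1)

lemma strictAntiOn_invSqrtSqSubOne : StrictAntiOn invSqrtSqSubOne (Ioi 1) := by
  intro a (ha : 1 < a) b (hb : 1 < b) hab
  have ha2 : 0 < a ^ 2 - 1 := by nlinarith
  exact one_div_lt_one_div_of_lt (sqrt_pos.2 ha2) (sqrt_lt_sqrt ha2.le (by nlinarith))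

lemma bijOn_invSqrtSqSubOne : BijOn invSqrtSqSubOne (Ioi 1) (Ioi 0) := by
  refine ⟨fun θ (hθ : 1 < θ) ↦ ?_, strictAntiOn_invSqrtSqSubOne.injOn, fun u (hu : 0 < u) ↦ ?_⟩
  · have : 0 < θ ^ 2 - 1 := by nlinarith
    exact one_div_pos.2 (sqrt_pos.2 this)
  · have hθ : 1 < √(1 + (1 / u) ^ 2) := by
      rw [lt_sqrt zero_le_one]
      have : 0 < (1 / u) ^ 2 := by positivity
      linarith
    refine ⟨√(1 + (1 / u) ^ 2), hθ, ?_⟩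
    rw [invSqrtSqSubOne, sq_sqrt (by positivity), add_sub_cancel_left,
      sqrt_sq (by positivity), one_div_one_div]

noncomputable def G (u : ℝ) : ℝ := π / 2 * (√(1 + u ^ 2) - 1) + √(1 + u ^ 2) * arctan u

lemma G_zero : G 0 = 0 := by simp [G]

lemma continuous_G : Continuous G := by
  unfold G; fun_prop

lemma strictMonoOn_G : StrictMonoOn G (Ici 0) := by
  intro a (ha : 0 ≤ a) b _ hab
  have hsqrt : √(1 + a ^ 2) < √(1 + b ^ 2) := sqrt_lt_sqrt (by positivity) (by nlinarith)
  have harctan_nonneg : 0 ≤ arctan a := arctan_nonneg.2 ha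
  unfold G
  gcongr

lemma sub_one_le_G {u : ℝ} (hu : 0 ≤ u) : u - 1 ≤ G u := by
  have hu_le : u ≤ √(1 + u ^ 2) := le_sqrt_of_sq_le (by linarith)
  have hone_le : 1 ≤ √(1 + u ^ 2) := one_le_sqrt.2 (by nlinarith)
  have : 0 ≤ √(1 + u ^ 2) * arctan u := mul_nonneg (sqrt_nonneg _) (arctan_nonneg.2 hu)
  have : 1 ≤ π / 2 := by linarith [pi_gt_three]
  unfold G
  nlinarith

lemma tendsto_G_atTop : Tendsto G atTop atTop :=
  tendsto_atTop_mono' _ (eventually_ge_atTop 0 |>.mono fun _ ↦ sub_one_le_G)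
    (tendsto_atTop_add_const_right _ _ tendsto_id)

lemma bijOn_G : BijOn G (Ioi 0) (Ioi 0) := by
  refine ⟨fun u (hu : 0 < u) ↦ ?_, (strictMonoOn_G.mono Ioi_subset_Ici_self).injOn, ?_⟩
  · simpa [G_zero] using strictMonoOn_G self_mem_Ici hu.le hu
  · have := intermediate_value_Ioi (a := 0) continuous_G.continuousOn tendsto_G_atTop
    rwa [G_zero] at this

lemma F_eq_inv_G_invSqrtSqSubOne {θ : ℝ} (hθ : 1 < θ) : F θ = (G (invSqrtSqSubOne θ))⁻¹ := by
  set s := √(θ ^ 2 - 1)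
  have hθ2 : 0 < θ ^ 2 - 1 := by nlinarith
  have hs : 0 < s := sqrt_pos.2 hθ2
  have hs2 : s ^ 2 = θ ^ 2 - 1 := sq_sqrt hθ2.le
  have hsqrt : √(1 + (1 / s) ^ 2) = θ / s := by
    rw [sqrt_eq_iff_mul_self_eq (by positivity) (by positivity)]
    field_simp
    linarith
  have hG : G (1 / s) = (π * (θ - s) + 2 * θ * arctan (1 / s)) / (2 * s) := by
    rw [G, hsqrt]
    field_simp
  rw [F, invSqrtSqSubOne, hG, inv_div]

/-- `F` is strictly increasing on `(1,∞)` and maps `(1,∞)` bijectively onto `(0,∞)`. -/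
theorem F_strictMono_bijective :
    StrictMonoOn F (Set.Ioi 1) ∧ Set.BijOn F (Set.Ioi 1) (Set.Ioi 0) := by
  have hF : EqOn (fun θ ↦ (G (invSqrtSqSubOne θ))⁻¹) F (Ioi 1) :=
    fun θ hθ ↦ (F_eq_inv_G_invSqrtSqSubOne hθ).symm
  have hGu_anti : StrictAntiOn (G ∘ invSqrtSqSubOne) (Ioi 1) :=
    (strictMonoOn_G.mono Ioi_subset_Ici_self).comp_strictAntiOn strictAntiOn_invSqrtSqSubOne
      bijOn_invSqrtSqSubOne.mapsTo
  have hGu_bij : BijOn (G ∘ invSqrtSqSubOne) (Ioi 1) (Ioi 0) := bijOn_G.comp bijOn_invSqrtSqSubOne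
  refine ⟨fun a ha b hb hab ↦ ?_, (bijOn_inv_Ioi_zero.comp hGu_bij).congr hF⟩
  rw [← hF ha, ← hF hb]
  exact inv_strictAntiOn.comp hGu_anti hGu_bij.mapsTo ha hb hab
end

section
/- For λ > 0 let θ̂_Y(λ) denote the infimum of Ψ_λ(φ) = ∫_{−1}^{1} √(φ(r)² + λ²·φ′(r)²) dr over all continuously differentiable functions φ : [−1,1] → ℝ with φ(−1) = φ(1) = 0 and ∫_{−1}^{1} φ(r) dr = 1. Then the map λ ↦ θ̂_Y(λ) is strictly increasing on (0,∞). -/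
/-! In the variable `s = λ²` each dissipation `s ↦ ∫ √(φ² + s φ'²)` is concave, hence so is the
yield stress, an infimum of such functions. It also grows at least like `√s / 2`, because the
dissipation dominates `√s ∫ |φ'|` and `∫ |φ'| ≥ 1/2` when `φ(-1) = 0` and `∫ φ = 1`. A concave
function on `[0, ∞)` tending to `+∞` is strictly increasing. -/

/-- The renormalized plastic dissipation
`Ψ_λ(φ) = ∫_{-1}^{1} √(φ(r)² + λ²·φ'(r)²) dr`. -/
noncomputable def Psi (lam : ℝ) (φ : ℝ → ℝ) : ℝ :=
  ∫ r in (-1 : ℝ)..1, Real.sqrt ((φ r) ^ 2 + lam ^ 2 * (deriv φ r) ^ 2)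

/-- The renormalized yield shear stress `θ̂_Y(λ)`: the infimum of `Ψ_λ(φ)` over all
C¹ functions `φ : [-1,1] → ℝ` with `φ(−1) = φ(1) = 0` and `∫_{−1}^{1} φ = 1`. -/
noncomputable def thetaY (lam : ℝ) : ℝ :=
  sInf {t : ℝ | ∃ φ : ℝ → ℝ, ContDiff ℝ 1 φ ∧ φ (-1) = 0 ∧ φ 1 = 0 ∧
    (∫ r in (-1 : ℝ)..1, φ r) = 1 ∧ Psi lam φ = t}

open Set Filter

theorem ConcaveOn.strictMonoOn_of_tendsto_atTop {f : ℝ → ℝ} {a : ℝ}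
    (hf : ConcaveOn ℝ (Ici a) f) (htop : Tendsto f atTop atTop) : StrictMonoOn f (Ici a) := by
  intro x hx y hy hxy
  obtain ⟨z, hfz, hyz⟩ := ((htop.eventually_gt_atTop (f x)).and (eventually_gt_atTop y)).exists
  have hy_mem : y ∈ openSegment ℝ x z := by
    rw [openSegment_eq_Ioo (hxy.trans hyz)]
    exact ⟨hxy, hyz⟩
  have hz : z ∈ Ici a := le_trans hy hyz.le
  by_contra! hfy
  exact (hf.left_lt_of_lt_right hx hz hy_mem (hfy.trans_lt hfz)).not_ge hfy

theorem concaveOn_ciInf {E ι : Type*} [AddCommMonoid E] [SMul ℝ E] [Nonempty ι] {s : Set E}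
    {f : ι → E → ℝ} (hf : ∀ i, ConcaveOn ℝ s (f i))
    (hbdd : ∀ x ∈ s, BddBelow (range fun i ↦ f i x)) :
    ConcaveOn ℝ s fun x ↦ ⨅ i, f i x := by
  refine ⟨(hf (Classical.arbitrary ι)).1, fun x hx y hy a b ha hb hab ↦ le_ciInf fun i ↦ ?_⟩
  dsimp only
  calc a • (⨅ i, f i x) + b • ⨅ i, f i y ≤ a • f i x + b • f i y := by
        gcongr
        exacts [ciInf_le (hbdd x hx) i, ciInf_le (hbdd y hy) i]
    _ ≤ f i (a • x + b • y) := (hf i).2 hx hy ha hb hab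

theorem concaveOn_intervalIntegral {E : Type*} [AddCommMonoid E] [SMul ℝ E] {s : Set E}
    {F : E → ℝ → ℝ} {a b : ℝ} (hab : a ≤ b) (hF : ∀ r ∈ Icc a b, ConcaveOn ℝ s (F · r))
    (hint : ∀ x ∈ s, IntervalIntegrable (F x) MeasureTheory.volume a b) :
    ConcaveOn ℝ s fun x ↦ ∫ r in a..b, F x r := by
  refine ⟨(hF a ⟨le_rfl, hab⟩).1, fun x hx y hy c d hc hd hcd ↦ ?_⟩
  simp only [smul_eq_mul]
  rw [← intervalIntegral.integral_const_mul, ← intervalIntegral.integral_const_mul,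
    ← intervalIntegral.integral_add ((hint x hx).const_mul c) ((hint y hy).const_mul d)]
  exact intervalIntegral.integral_mono_on hab (((hint x hx).const_mul c).add
    ((hint y hy).const_mul d)) (hint _ ((hF a ⟨le_rfl, hab⟩).1 hx hy hc hd hcd))
    fun r hr ↦ (hF r hr).2 hx hy hc hd hcd

theorem concaveOn_sqrt_add_mul {c d : ℝ} (hc : 0 ≤ c) (hd : 0 ≤ d) :
    ConcaveOn ℝ (Ici 0) fun s ↦ √(c + s * d) := by
  refine ⟨convex_Ici 0, fun x hx y hy a b ha hb hab ↦ ?_⟩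
  have hx' : 0 ≤ c + x * d := add_nonneg hc (mul_nonneg hx hd)
  have hy' : 0 ≤ c + y * d := add_nonneg hc (mul_nonneg hy hd)
  convert Real.strictConcaveOn_sqrt.concaveOn.2 hx' hy' ha hb hab using 2
  simp only [smul_eq_mul]
  linear_combination -c * hab

/-- `Psi lam φ = dissipation (lam ^ 2) φ`. -/
noncomputable def dissipation (s : ℝ) (φ : ℝ → ℝ) : ℝ :=
  ∫ r in (-1 : ℝ)..1, √(φ r ^ 2 + s * deriv φ r ^ 2)

def Admissible (φ : ℝ → ℝ) : Prop :=
  ContDiff ℝ 1 φ ∧ φ (-1) = 0 ∧ φ 1 = 0 ∧ (∫ r in (-1 : ℝ)..1, φ r) = 1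

noncomputable def yieldStress (s : ℝ) : ℝ :=
  ⨅ φ : {φ // Admissible φ}, dissipation s φ

theorem thetaY_eq_yieldStress (lam : ℝ) : thetaY lam = yieldStress (lam ^ 2) := by
  refine congrArg sInf (Set.ext fun t ↦ ⟨?_, ?_⟩)
  · rintro ⟨φ, hφ, hm, hp, hint, rfl⟩
    exact ⟨⟨φ, hφ, hm, hp, hint⟩, rfl⟩
  · rintro ⟨⟨φ, hφ, hm, hp, hint⟩, rfl⟩
    exact ⟨φ, hφ, hm, hp, hint, rfl⟩

theorem admissible_parabola : Admissible fun r ↦ 3 / 4 * (1 - r ^ 2) := by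
  refine ⟨by fun_prop, by norm_num, by norm_num, ?_⟩
  simp [intervalIntegral.integral_const_mul, intervalIntegral.integral_sub, integral_pow]
  norm_num

instance : Nonempty {φ // Admissible φ} :=
  ⟨⟨_, admissible_parabola⟩⟩

theorem dissipation_nonneg (s : ℝ) (φ : ℝ → ℝ) : 0 ≤ dissipation s φ :=
  intervalIntegral.integral_nonneg (by norm_num) fun _ _ ↦ Real.sqrt_nonneg _

section

variable {φ : ℝ → ℝ}

theorem intervalIntegrable_dissipation_integrand (s : ℝ) (hφ : ContDiff ℝ 1 φ) (a b : ℝ) :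
    IntervalIntegrable (fun r ↦ √(φ r ^ 2 + s * deriv φ r ^ 2)) MeasureTheory.volume a b := by
  have := hφ.continuous
  have := hφ.continuous_deriv le_rfl
  exact Continuous.intervalIntegrable (by fun_prop) a b

theorem concaveOn_dissipation (hφ : ContDiff ℝ 1 φ) : ConcaveOn ℝ (Ici 0) (dissipation · φ) :=
  concaveOn_intervalIntegral (by norm_num)
    (fun _ _ ↦ concaveOn_sqrt_add_mul (sq_nonneg _) (sq_nonneg _))
    fun s _ ↦ intervalIntegrable_dissipation_integrand s hφ _ _

theorem sqrt_mul_integral_abs_deriv_le_dissipation {s : ℝ} (hs : 0 ≤ s) (hφ : ContDiff ℝ 1 φ) :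
    √s * ∫ r in (-1 : ℝ)..1, |deriv φ r| ≤ dissipation s φ := by
  rw [← intervalIntegral.integral_const_mul]
  refine intervalIntegral.integral_mono_on (by norm_num)
    (((hφ.continuous_deriv le_rfl).abs.intervalIntegrable _ _).const_mul _)
    (intervalIntegrable_dissipation_integrand s hφ _ _) fun r _ ↦ ?_
  calc √s * |deriv φ r| = √(s * deriv φ r ^ 2) := by
        rw [Real.sqrt_mul hs, Real.sqrt_sq_eq_abs]
    _ ≤ √(φ r ^ 2 + s * deriv φ r ^ 2) := Real.sqrt_le_sqrt (by nlinarith [sq_nonneg (φ r)])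

theorem le_integral_abs_deriv (hφ : ContDiff ℝ 1 φ) {a b r : ℝ} (ha : φ a = 0)
    (hr : r ∈ Icc a b) : φ r ≤ ∫ x in a..b, |deriv φ x| := by
  calc φ r = ∫ x in a..r, deriv φ x := by
        rw [intervalIntegral.integral_deriv_eq_sub
          (fun x _ ↦ (hφ.differentiable one_ne_zero).differentiableAt)
          ((hφ.continuous_deriv le_rfl).intervalIntegrable _ _), ha, sub_zero]
    _ ≤ ∫ x in a..r, |deriv φ x| :=
        (le_abs_self _).trans (intervalIntegral.abs_integral_le_integral_abs hr.1)
    _ ≤ ∫ x in a..b, |deriv φ x| :=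
        intervalIntegral.integral_mono_interval le_rfl hr.1 hr.2
          (Eventually.of_forall fun _ ↦ abs_nonneg _)
          ((hφ.continuous_deriv le_rfl).abs.intervalIntegrable _ _)

theorem one_le_two_mul_integral_abs_deriv (hφ : Admissible φ) :
    1 ≤ 2 * ∫ r in (-1 : ℝ)..1, |deriv φ r| := by
  obtain ⟨hφ, hm, -, hint⟩ := hφ
  calc 1 = ∫ r in (-1 : ℝ)..1, φ r := hint.symm
    _ ≤ ∫ r in (-1 : ℝ)..1, ∫ x in (-1 : ℝ)..1, |deriv φ x| :=
        intervalIntegral.integral_mono_on (by norm_num) (hφ.continuous.intervalIntegrable _ _)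
          intervalIntegrable_const fun r hr ↦ le_integral_abs_deriv hφ hm hr
    _ = 2 * ∫ r in (-1 : ℝ)..1, |deriv φ r| := by norm_num

end

theorem bddBelow_range_dissipation (s : ℝ) :
    BddBelow (range fun φ : {φ // Admissible φ} ↦ dissipation s φ) :=
  ⟨0, by rintro _ ⟨φ, rfl⟩; exact dissipation_nonneg s φ⟩

theorem concaveOn_yieldStress : ConcaveOn ℝ (Ici 0) yieldStress :=
  concaveOn_ciInf (fun φ ↦ concaveOn_dissipation φ.2.1)
    fun s _ ↦ bddBelow_range_dissipation s

theorem sqrt_div_two_le_yieldStress {s : ℝ} (hs : 0 ≤ s) : √s / 2 ≤ yieldStress s :=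
  le_ciInf fun φ ↦ by
    have h1 := one_le_two_mul_integral_abs_deriv φ.2
    have h2 := sqrt_mul_integral_abs_deriv_le_dissipation hs φ.2.1
    nlinarith [Real.sqrt_nonneg s]

theorem tendsto_yieldStress_atTop : Tendsto yieldStress atTop atTop :=
  tendsto_atTop_mono' _ ((eventually_ge_atTop 0).mono fun _ ↦ sqrt_div_two_le_yieldStress)
    (Real.tendsto_sqrt_atTop.atTop_div_const two_pos)

theorem strictMonoOn_yieldStress : StrictMonoOn yieldStress (Ici 0) :=
  concaveOn_yieldStress.strictMonoOn_of_tendsto_atTop tendsto_yieldStress_atTop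

/-- The renormalized yield shear stress is strictly increasing in the renormalized
dissipative scale `λ`: thinner specimens are stronger. -/
theorem thetaY_strictMono : StrictMonoOn thetaY (Set.Ioi 0) := by
  intro lam hlam mu _ hlt
  rw [thetaY_eq_yieldStress, thetaY_eq_yieldStress]
  exact strictMonoOn_yieldStress (sq_nonneg lam) (sq_nonneg mu)
    (pow_lt_pow_left₀ hlt (le_of_lt hlam) two_ne_zero)
end

section
/- Let F(θ) = 2√(θ²−1) / ( π(θ − √(θ²−1)) + 2θ·arctan(1/√(θ²−1)) ) for θ > 1. Then lim_{θ → 1⁺} F(θ)/√(θ−1) = √2/π. -/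
/-!
Since `√(θ² − 1) = √(θ − 1)·√(θ + 1)`, the quotient `F θ / √(θ − 1)` equals `2√(θ + 1)` divided
by the denominator of `F`. As `θ → 1⁺` we have `√(θ² − 1) → 0⁺`, so the arctangent tends to `π/2`
and the denominator to `π + 2·(π/2) = 2π`, while the numerator tends to `2√2`.
-/

open Filter Real Set Topology

lemma tendsto_arctan_one_div_nhdsGT_zero :
    Tendsto (fun x : ℝ => arctan (1 / x)) (𝓝[>] 0) (𝓝 (π / 2)) := by
  simp only [one_div]
  exact (tendsto_arctan_atTop.mono_right nhdsWithin_le_nhds).comp tendsto_inv_nhdsGT_zero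

lemma tendsto_sqrt_sq_sub_one_nhdsGT_one :
    Tendsto (fun θ : ℝ => √(θ ^ 2 - 1)) (𝓝[>] 1) (𝓝[>] 0) := by
  refine tendsto_nhdsWithin_of_tendsto_nhds_of_eventually_within _ ?_ ?_
  · have hcont : Continuous fun θ : ℝ => √(θ ^ 2 - 1) := by fun_prop
    simpa using (hcont.tendsto 1).mono_left nhdsWithin_le_nhds
  · filter_upwards [self_mem_nhdsWithin] with θ (hθ : 1 < θ)
    exact sqrt_pos.mpr (by nlinarith)

lemma tendsto_F_denominator_nhdsGT_one :
    Tendsto (fun θ : ℝ => π * (θ - √(θ ^ 2 - 1)) + 2 * θ * arctan (1 / √(θ ^ 2 - 1)))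
      (𝓝[>] 1) (𝓝 (2 * π)) := by
  have hid : Tendsto (fun θ : ℝ => θ) (𝓝[>] 1) (𝓝 1) :=
    tendsto_nhdsWithin_of_tendsto_nhds tendsto_id
  have hsqrt := tendsto_sqrt_sq_sub_one_nhdsGT_one
  have harctan : Tendsto (fun θ : ℝ => arctan (1 / √(θ ^ 2 - 1))) (𝓝[>] 1) (𝓝 (π / 2)) :=
    tendsto_arctan_one_div_nhdsGT_zero.comp hsqrt
  convert ((tendsto_const_nhds (x := π)).mul
      (hid.sub (hsqrt.mono_right nhdsWithin_le_nhds))).add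
    (((tendsto_const_nhds (x := (2 : ℝ))).mul hid).mul harctan) using 2
  ring

lemma F_div_sqrt_sub_one {θ : ℝ} (hθ : 1 < θ) :
    F θ / √(θ - 1) = 2 * √(θ + 1) /
      (π * (θ - √(θ ^ 2 - 1)) + 2 * θ * arctan (1 / √(θ ^ 2 - 1))) := by
  have hpos : 0 < √(θ - 1) := sqrt_pos.mpr (by linarith)
  have hfactor : √(θ ^ 2 - 1) = √(θ - 1) * √(θ + 1) := by
    rw [← sqrt_mul (by linarith)]
    ring_nf
  rw [F, div_right_comm, hfactor, mul_left_comm, mul_div_cancel_left₀ _ hpos.ne']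

/-- The asymptotic behavior `F(θ) ∼ (√2/π)·√(θ−1)` as `θ → 1⁺`:
`lim_{θ → 1⁺} F(θ)/√(θ−1) = √2/π`. -/
theorem F_asymptotics_at_one :
    Filter.Tendsto (fun θ : ℝ => F θ / Real.sqrt (θ - 1))
      (nhdsWithin 1 (Set.Ioi 1)) (nhds (Real.sqrt 2 / Real.pi)) := by
  have hnum : Tendsto (fun θ : ℝ => 2 * √(θ + 1)) (𝓝[>] 1) (𝓝 (2 * √2)) := by
    have hcont : Continuous fun θ : ℝ => 2 * √(θ + 1) := by fun_prop
    convert (hcont.tendsto 1).mono_left nhdsWithin_le_nhds using 2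
    norm_num
  have hlim := hnum.div tendsto_F_denominator_nhdsGT_one (by positivity)
  rw [mul_div_mul_left _ _ two_ne_zero] at hlim
  refine hlim.congr' ?_
  filter_upwards [self_mem_nhdsWithin] with θ (hθ : 1 < θ)
  exact (F_div_sqrt_sub_one hθ).symm
end

section
/- For λ > 0 let θ̂_Y(λ) denote the infimum of Ψ_λ(φ) = ∫_{−1}^{1} √(φ(r)² + λ²·φ′(r)²) dr over all continuously differentiable functions φ : [−1,1] → ℝ with φ(−1) = φ(1) = 0 and ∫_{−1}^{1} φ(r) dr = 1. Then lim_{λ → 0⁺} (θ̂_Y(λ) − 1)/λ² = π²/2. -/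
/-!
For the upper bound, the profile `φ = cos²(πr/2)` satisfies
`√(φ² + λ²φ'²) ≤ φ + (λ²π²/2) sin²(πr/2)` pointwise, and the right side integrates to `1 + π²λ²/2`.

The lower bound is a calibration argument: if `(c + λV')² + V² ≤ 1` on `[-1, 1]`, then by
Cauchy–Schwarz and an integration by parts (`φ` vanishes at `±1`, `∫ φ = 1`),
`c = ∫ (c + λV') φ + V · λφ' ≤ Ψ_λ(φ)` for every admissible `φ`. Choosing `V = -2λk tan(kr)` with
`k < π/2` gives `θ̂_Y(λ) ≥ 1 + 2k²λ² - O(λ⁴)`, and `2k²` increases to `π²/2` as `k → π/2`.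
-/

open Real Set Filter Topology

lemma mul_add_mul_le_sqrt {w v x y : ℝ} (h : w ^ 2 + v ^ 2 ≤ 1) :
    w * x + v * y ≤ √(x ^ 2 + y ^ 2) :=
  Real.le_sqrt_of_sq_le <| by
    nlinarith [sq_nonneg (w * y - v * x), sq_nonneg x, sq_nonneg y, sq_nonneg (w * x + v * y)]

lemma sqrt_sq_add_le_add {x y z : ℝ} (hx : 0 ≤ x) (hz : 0 ≤ z) (h : y ≤ 2 * x * z) :
    √(x ^ 2 + y) ≤ x + z :=
  Real.sqrt_le_iff.2 ⟨by positivity, by nlinarith [sq_nonneg z]⟩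

lemma continuous_Psi_integrand {lam : ℝ} {φ : ℝ → ℝ} (hφ : ContDiff ℝ 1 φ) :
    Continuous fun r => √(φ r ^ 2 + lam ^ 2 * deriv φ r ^ 2) := by
  have := hφ.continuous_deriv le_rfl
  have := hφ.continuous
  fun_prop

lemma Psi_nonneg (lam : ℝ) (φ : ℝ → ℝ) : 0 ≤ Psi lam φ :=
  intervalIntegral.integral_nonneg (by norm_num) fun _ _ => Real.sqrt_nonneg _

lemma thetaY_le_Psi {lam : ℝ} {φ : ℝ → ℝ} (hφ : ContDiff ℝ 1 φ) (hφm : φ (-1) = 0) (hφp : φ 1 = 0)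
    (hφi : ∫ r in (-1 : ℝ)..1, φ r = 1) : thetaY lam ≤ Psi lam φ :=
  csInf_le ⟨0, by rintro _ ⟨ψ, -, -, -, -, rfl⟩; exact Psi_nonneg lam ψ⟩ ⟨φ, hφ, hφm, hφp, hφi, rfl⟩

noncomputable def cosBump (r : ℝ) : ℝ := cos (π / 2 * r) ^ 2

lemma hasDerivAt_cosBump (r : ℝ) :
    HasDerivAt cosBump (-π * sin (π / 2 * r) * cos (π / 2 * r)) r := by
  refine (((hasDerivAt_id' r).const_mul (π / 2)).cos.pow 2).congr_deriv ?_
  push_cast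
  ring

lemma contDiff_cosBump : ContDiff ℝ 1 cosBump := by
  unfold cosBump; fun_prop

lemma cosBump_neg_one : cosBump (-1) = 0 := by simp [cosBump]

lemma cosBump_one : cosBump 1 = 0 := by simp [cosBump]

lemma integral_cosBump : ∫ r in (-1 : ℝ)..1, cosBump r = 1 := by
  simp only [cosBump]
  rw [intervalIntegral.integral_comp_mul_left (fun x => cos x ^ 2) (by positivity),
    integral_cos_sq]
  simp

lemma integral_sin_sq_mul_pi_div_two : ∫ r in (-1 : ℝ)..1, sin (π / 2 * r) ^ 2 = 1 := by
  rw [intervalIntegral.integral_comp_mul_left (fun x => sin x ^ 2) (by positivity),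
    integral_sin_sq]
  simp

lemma Psi_cosBump_le (lam : ℝ) : Psi lam cosBump ≤ 1 + π ^ 2 / 2 * lam ^ 2 := by
  have hderiv : deriv cosBump = fun r => -π * sin (π / 2 * r) * cos (π / 2 * r) :=
    funext fun r => (hasDerivAt_cosBump r).deriv
  have hpt : ∀ r ∈ Icc (-1 : ℝ) 1, √(cosBump r ^ 2 + lam ^ 2 * deriv cosBump r ^ 2)
      ≤ cosBump r + lam ^ 2 * π ^ 2 / 2 * sin (π / 2 * r) ^ 2 := fun r _ => by
    rw [hderiv]
    exact sqrt_sq_add_le_add (sq_nonneg _) (by positivity) (le_of_eq (by unfold cosBump; ring))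
  have hint : IntervalIntegrable (fun r => lam ^ 2 * π ^ 2 / 2 * sin (π / 2 * r) ^ 2)
      MeasureTheory.volume (-1) 1 := by
    apply Continuous.intervalIntegrable; fun_prop
  calc Psi lam cosBump
      ≤ ∫ r in (-1 : ℝ)..1, (cosBump r + lam ^ 2 * π ^ 2 / 2 * sin (π / 2 * r) ^ 2) :=
        intervalIntegral.integral_mono_on (by norm_num)
          ((continuous_Psi_integrand contDiff_cosBump).intervalIntegrable _ _)
          ((contDiff_cosBump.continuous.intervalIntegrable _ _).add hint) hpt
    _ = 1 + π ^ 2 / 2 * lam ^ 2 := by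
      rw [intervalIntegral.integral_add (contDiff_cosBump.continuous.intervalIntegrable _ _) hint,
        intervalIntegral.integral_const_mul, integral_cosBump, integral_sin_sq_mul_pi_div_two]
      ring

lemma thetaY_le (lam : ℝ) : thetaY lam ≤ 1 + π ^ 2 / 2 * lam ^ 2 :=
  (thetaY_le_Psi contDiff_cosBump cosBump_neg_one cosBump_one integral_cosBump).trans
    (Psi_cosBump_le lam)

lemma le_thetaY {lam c : ℝ}
    (h : ∀ φ : ℝ → ℝ, ContDiff ℝ 1 φ → φ (-1) = 0 → φ 1 = 0 →
      ∫ r in (-1 : ℝ)..1, φ r = 1 → c ≤ Psi lam φ) :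
    c ≤ thetaY lam := by
  refine le_csInf ⟨_, cosBump, contDiff_cosBump, cosBump_neg_one, cosBump_one,
    integral_cosBump, rfl⟩ ?_
  rintro _ ⟨φ, hφ, hφm, hφp, hφi, rfl⟩
  exact h φ hφ hφm hφp hφi

lemma le_Psi_of_calibration {lam c : ℝ} {V V' φ : ℝ → ℝ}
    (hV : ∀ r ∈ Icc (-1 : ℝ) 1, HasDerivAt V (V' r) r) (hV' : ContinuousOn V' (Icc (-1) 1))
    (hcal : ∀ r ∈ Icc (-1 : ℝ) 1, (c + lam * V' r) ^ 2 + V r ^ 2 ≤ 1)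
    (hφ : ContDiff ℝ 1 φ) (hφm : φ (-1) = 0) (hφp : φ 1 = 0)
    (hφi : ∫ r in (-1 : ℝ)..1, φ r = 1) :
    c ≤ Psi lam φ := by
  have hIcc : uIcc (-1 : ℝ) 1 = Icc (-1) 1 := uIcc_of_le (by norm_num)
  have hφc := hφ.continuous
  have hφ'c := hφ.continuous_deriv le_rfl
  have hVc : ContinuousOn V (Icc (-1) 1) :=
    fun r hr => (hV r hr).continuousAt.continuousWithinAt
  have hparts : ∫ r in (-1 : ℝ)..1, V' r * φ r + V r * deriv φ r = 0 := by
    rw [intervalIntegral.integral_deriv_mul_eq_sub (by rwa [hIcc])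
      (fun r _ => (hφ.differentiable one_ne_zero r).hasDerivAt)
      (hV'.intervalIntegrable_of_Icc (by norm_num)) (hφ'c.intervalIntegrable _ _), hφm, hφp]
    ring
  have hint : IntervalIntegrable (fun r => V' r * φ r + V r * deriv φ r)
      MeasureTheory.volume (-1) 1 :=
    ((hV'.mul hφc.continuousOn).add (hVc.mul hφ'c.continuousOn)).intervalIntegrable_of_Icc
      (by norm_num)
  calc c = ∫ r in (-1 : ℝ)..1, (c * φ r + lam * (V' r * φ r + V r * deriv φ r)) := by
        rw [intervalIntegral.integral_add ((hφc.intervalIntegrable _ _).const_mul c)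
          (hint.const_mul lam), intervalIntegral.integral_const_mul,
          intervalIntegral.integral_const_mul, hφi, hparts]
        ring
    _ ≤ Psi lam φ := by
      refine intervalIntegral.integral_mono_on (by norm_num)
        (((hφc.intervalIntegrable _ _).const_mul c).add (hint.const_mul lam))
        ((continuous_Psi_integrand hφ).intervalIntegrable _ _) fun r hr => ?_
      have := mul_add_mul_le_sqrt (x := φ r) (y := lam * deriv φ r) (hcal r hr)
      rw [mul_pow] at this
      linarith

lemma tan_sq_le_tan_sq {x k : ℝ} (hx : |x| ≤ k) (hk : k < π / 2) : tan x ^ 2 ≤ tan k ^ 2 := by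
  obtain ⟨hxl, hxr⟩ := abs_le.1 hx
  have hmono := strictMonoOn_tan.monotoneOn (a := x) (b := k)
  have hmono' := strictMonoOn_tan.monotoneOn (a := -k) (b := x)
  refine sq_le_sq' ?_ (hmono ⟨by linarith, by linarith⟩ ⟨by linarith, hk⟩ hxr)
  rw [← tan_neg]
  exact hmono' ⟨by linarith, by linarith⟩ ⟨by linarith, by linarith⟩ hxl

lemma calibration_bound {lam k t K : ℝ} (ht : 2 * k ^ 2 * (1 + t ^ 2) ≤ K)
    (hlam : lam ^ 2 * K ^ 2 ≤ 4 * k ^ 2) :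
    (1 + 2 * k ^ 2 * lam ^ 2 - lam ^ 4 * K ^ 2 / 2 + lam * (-2 * lam * k ^ 2 * (1 + t ^ 2))) ^ 2
      + (-2 * lam * k * t) ^ 2 ≤ 1 := by
  set E := 2 * k ^ 2 * t ^ 2 + lam ^ 2 * K ^ 2 / 2 with hE
  have hE0 : 0 ≤ E := by positivity
  have hEK : E ≤ K := by linarith
  have hlhs : (1 + 2 * k ^ 2 * lam ^ 2 - lam ^ 4 * K ^ 2 / 2
      + lam * (-2 * lam * k ^ 2 * (1 + t ^ 2))) ^ 2 + (-2 * lam * k * t) ^ 2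
      = 1 - lam ^ 4 * ((K - E) * (K + E)) := by ring
  rw [hlhs]
  exact sub_le_self _ (mul_nonneg (by positivity) (mul_nonneg (by linarith) (by linarith)))

/-- `V = λu` with `u(r) = -2k tan(kr)`, the solution of the Riccati equation `u' = -2k² - u²/2`
for which the `r`-dependent `λ²` terms of the calibration inequality cancel. -/
lemma le_thetaY_of_lt_pi_div_two {lam k K : ℝ} (hk0 : 0 ≤ k) (hk : k < π / 2)
    (hK : 2 * k ^ 2 * (1 + tan k ^ 2) ≤ K) (hlam : lam ^ 2 * K ^ 2 ≤ 4 * k ^ 2) :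
    1 + 2 * k ^ 2 * lam ^ 2 - lam ^ 4 * K ^ 2 / 2 ≤ thetaY lam := by
  have hkr : ∀ r ∈ Icc (-1 : ℝ) 1, |k * r| ≤ k := fun r hr => by
    rw [abs_mul, abs_of_nonneg hk0]
    exact mul_le_of_le_one_right hk0 (abs_le.2 hr)
  have hkr_mem : ∀ r ∈ Icc (-1 : ℝ) 1, k * r ∈ Ioo (-(π / 2)) (π / 2) := fun r hr =>
    abs_lt.1 ((hkr r hr).trans_lt hk)
  have hV : ∀ r ∈ Icc (-1 : ℝ) 1, HasDerivAt (fun r => -2 * lam * k * tan (k * r))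
      (-2 * lam * k ^ 2 * (1 + tan (k * r) ^ 2)) r := fun r hr => by
    have hcos : cos (k * r) ≠ 0 := (cos_pos_of_mem_Ioo (hkr_mem r hr)).ne'
    refine (((hasDerivAt_tan hcos).comp r ((hasDerivAt_id' r).const_mul k)).const_mul
      (-2 * lam * k)).congr_deriv ?_
    rw [one_div, ← inv_one_add_tan_sq hcos, inv_inv]
    ring
  have htan : ContinuousOn (fun r => tan (k * r)) (Icc (-1) 1) :=
    continuousOn_tan_Ioo.comp (by fun_prop) hkr_mem
  refine le_thetaY fun φ hφ hφm hφp hφi => le_Psi_of_calibration hV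
    (continuousOn_const.mul (continuousOn_const.add (htan.pow 2))) (fun r hr => ?_) hφ hφm hφp hφi
  refine calibration_bound (le_trans ?_ hK) hlam
  have := tan_sq_le_tan_sq (hkr r hr) hk
  gcongr

/-- The asymptotic behavior `θ_Y − 1 ∼ (π²/2)·λ²` for small `λ`:
`lim_{λ → 0⁺} (θ̂_Y(λ) − 1)/λ² = π²/2`. -/
theorem thetaY_asymptotics_small :
    Filter.Tendsto (fun lam : ℝ => (thetaY lam - 1) / lam ^ 2)
      (nhdsWithin 0 (Set.Ioi 0)) (nhds (Real.pi ^ 2 / 2)) := by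
  refine tendsto_order.2 ⟨fun b hb => ?_, fun b hb => ?_⟩
  · obtain ⟨k, hbk, hk0, hkπ⟩ : ∃ k, b < 2 * k ^ 2 ∧ 0 < k ∧ k < π / 2 := by
      have hlim : Tendsto (fun k : ℝ => 2 * k ^ 2) (𝓝[<] (π / 2)) (𝓝 (π ^ 2 / 2)) :=
        ((by fun_prop : Continuous fun k : ℝ => 2 * k ^ 2).tendsto' _ _ (by ring)).mono_left
          nhdsWithin_le_nhds
      exact ((hlim.eventually (lt_mem_nhds hb)).and (Ioo_mem_nhdsLT pi_div_two_pos)).exists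
    set K := 2 * k ^ 2 * (1 + tan k ^ 2)
    have hlim : Tendsto (fun lam : ℝ => lam ^ 2 * K ^ 2) (𝓝[>] 0) (𝓝 0) :=
      ((by fun_prop : Continuous fun lam : ℝ => lam ^ 2 * K ^ 2).tendsto' _ _ (by simp)).mono_left
        nhdsWithin_le_nhds
    filter_upwards [hlim.eventually (gt_mem_nhds (by positivity : (0 : ℝ) < 4 * k ^ 2)),
      hlim.eventually (gt_mem_nhds (by linarith : (0 : ℝ) < 2 * (2 * k ^ 2 - b))),
      self_mem_nhdsWithin] with lam hlam hlamb (hlam0 : 0 < lam)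
    have hθ := le_thetaY_of_lt_pi_div_two (K := K) hk0.le hkπ le_rfl hlam.le
    have := mul_lt_mul_of_pos_right hlamb (pow_pos hlam0 2)
    rw [lt_div_iff₀ (pow_pos hlam0 2)]
    linarith
  · filter_upwards [self_mem_nhdsWithin] with lam (hlam0 : 0 < lam)
    rw [div_lt_iff₀ (pow_pos hlam0 2)]
    nlinarith [thetaY_le lam, pow_pos hlam0 2]
end

section
/- For every real θ > 1, ∫_{0}^{1} 1/(θ − √(1−s²)) ds = ( π(θ − √(θ²−1)) + 2θ·arctan(1/√(θ²−1)) ) / ( 2√(θ²−1) ). -/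
/-!
Substituting `s = sin t` turns the integral into `∫₀^{π/2} cos t / (θ - cos t) dt`, which the
half-angle substitution `u = tan (t / 2)` integrates: with `b = √(θ² - 1)`, a primitive is
`(2θ / b) · arctan ((θ + 1) / b · tan (t / 2)) - t`. At `t = π / 2` the arctan term is
`arctan ((θ + 1) / b)`, and since `((θ + 1) / b)² = (θ + 1) / (θ - 1)`, the double-angle formula
for `arctan` gives `2 · arctan ((θ + 1) / b) = π / 2 + arctan (1 / b)`.
-/

open Real Set

lemma sqrt_one_sub_sq_le_one (s : ℝ) : √(1 - s ^ 2) ≤ 1 :=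
  Real.sqrt_le_one.mpr (by nlinarith)

lemma integral_zero_one_eq_integral_comp_sin {f : ℝ → ℝ} (hf : Continuous f) :
    ∫ s in (0 : ℝ)..1, f s = ∫ t in (0 : ℝ)..(π / 2), f (sin t) * cos t := by
  have h := intervalIntegral.integral_comp_mul_deriv (fun t _ ↦ hasDerivAt_sin t)
    continuous_cos.continuousOn hf (a := 0) (b := π / 2)
  rw [sin_zero, sin_pi_div_two] at h
  exact h.symm

lemma hasDerivAt_arctan_mul_tan_half (c : ℝ) {t : ℝ} (ht : cos (t / 2) ≠ 0) :
    HasDerivAt (fun t ↦ arctan (c * tan (t / 2)))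
      (c / (1 + cos t + c ^ 2 * (1 - cos t))) t := by
  have htan : HasDerivAt (tan ∘ fun t ↦ t / 2) (1 / cos (t / 2) ^ 2 * (1 / 2)) t :=
    (hasDerivAt_tan ht).comp t ((hasDerivAt_id' t).div_const 2)
  refine ((htan.const_mul c).arctan).congr_deriv ?_
  have hcos : cos t = cos (t / 2) ^ 2 - sin (t / 2) ^ 2 := by
    rw [← cos_two_mul']; ring_nf
  have hpyth := sin_sq_add_cos_sq (t / 2)
  have hplus : 1 + cos t = 2 * cos (t / 2) ^ 2 := by linarith
  have hminus : 1 - cos t = 2 * sin (t / 2) ^ 2 := by linarith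
  rw [Function.comp_apply, tan_eq_sin_div_cos, hplus, hminus]
  field_simp

lemma arctan_sq_sub_one_div_two_mul {c : ℝ} (hc : 1 < c) :
    arctan ((c ^ 2 - 1) / (2 * c)) = 2 * arctan c - π / 2 := by
  have hx : 0 < (c ^ 2 - 1) / (2 * c) := div_pos (by nlinarith) (by linarith)
  have hinv : 2 * c / (1 - c ^ 2) = -((c ^ 2 - 1) / (2 * c))⁻¹ := by
    rw [inv_div, ← div_neg, neg_sub]
  rw [two_mul_arctan_add_pi hc, hinv, arctan_neg, arctan_inv_of_pos hx]
  ring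

lemma hasDerivAt_primitive_cos_div_sub_cos {θ t : ℝ} (hθ : 1 < θ) (ht : cos (t / 2) ≠ 0) :
    HasDerivAt
      (fun t ↦ 2 * θ / √(θ ^ 2 - 1) * arctan ((θ + 1) / √(θ ^ 2 - 1) * tan (t / 2)) - t)
      (cos t / (θ - cos t)) t := by
  have hb : 0 < √(θ ^ 2 - 1) := sqrt_pos.mpr (by nlinarith)
  have hbsq : √(θ ^ 2 - 1) ^ 2 = θ ^ 2 - 1 := sq_sqrt (by nlinarith)
  have hden : 0 < θ - cos t := by linarith [cos_le_one t]
  have hhalf : 1 + cos t + ((θ + 1) / √(θ ^ 2 - 1)) ^ 2 * (1 - cos t)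
      = 2 * (θ + 1) * (θ - cos t) / √(θ ^ 2 - 1) ^ 2 := by
    field_simp
    rw [hbsq]
    ring
  refine (((hasDerivAt_arctan_mul_tan_half _ ht).const_mul _).sub
    (hasDerivAt_id' t)).congr_deriv ?_
  rw [hhalf]
  field_simp
  ring

lemma integral_cos_div_sub_cos {θ : ℝ} (hθ : 1 < θ) :
    ∫ t in (0 : ℝ)..(π / 2), cos t / (θ - cos t)
      = 2 * θ / √(θ ^ 2 - 1) * arctan ((θ + 1) / √(θ ^ 2 - 1)) - π / 2 := by
  have hderiv : ∀ t ∈ uIcc 0 (π / 2), HasDerivAt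
      (fun t ↦ 2 * θ / √(θ ^ 2 - 1) * arctan ((θ + 1) / √(θ ^ 2 - 1) * tan (t / 2)) - t)
      (cos t / (θ - cos t)) t := by
    intro t ht
    rw [uIcc_of_le (by positivity)] at ht
    refine hasDerivAt_primitive_cos_div_sub_cos hθ (cos_pos_of_mem_Ioo ⟨?_, ?_⟩).ne'
      <;> linarith [ht.1, ht.2, pi_pos]
  have hint : IntervalIntegrable (fun t ↦ cos t / (θ - cos t)) MeasureTheory.volume 0 (π / 2) :=
    (continuous_cos.div (by fun_prop) fun t ↦ by linarith [cos_le_one t]).intervalIntegrable _ _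
  rw [intervalIntegral.integral_eq_sub_of_hasDerivAt hderiv hint]
  simp [show π / 2 / 2 = π / 4 by ring, tan_pi_div_four]

/-- Explicit evaluation of the integral in equation (23bis) of the paper: for `θ > 1`,
`∫₀¹ 1/(θ − √(1−s²)) ds = (π(θ − √(θ²−1)) + 2θ·arctan(1/√(θ²−1))) / (2√(θ²−1))`. -/
theorem integral_eval (θ : ℝ) (hθ : 1 < θ) :
    (∫ s in (0 : ℝ)..1, 1 / (θ - Real.sqrt (1 - s ^ 2))) =
      (Real.pi * (θ - Real.sqrt (θ ^ 2 - 1)) +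
        2 * θ * Real.arctan (1 / Real.sqrt (θ ^ 2 - 1))) /
        (2 * Real.sqrt (θ ^ 2 - 1)) := by
  have hb : 0 < √(θ ^ 2 - 1) := sqrt_pos.mpr (by nlinarith)
  have hbsq : √(θ ^ 2 - 1) ^ 2 = θ ^ 2 - 1 := sq_sqrt (by nlinarith)
  have hcont : Continuous fun s ↦ 1 / (θ - √(1 - s ^ 2)) :=
    continuous_const.div (by fun_prop) fun s ↦ by linarith [sqrt_one_sub_sq_le_one s]
  have hsin : ∫ t in (0 : ℝ)..(π / 2), 1 / (θ - √(1 - sin t ^ 2)) * cos t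
      = ∫ t in (0 : ℝ)..(π / 2), cos t / (θ - cos t) := by
    refine intervalIntegral.integral_congr fun t ht ↦ ?_
    rw [uIcc_of_le (by positivity)] at ht
    rw [← cos_eq_sqrt_one_sub_sin_sq (by linarith [ht.1, pi_pos]) ht.2]
    ring
  have harctan : arctan (1 / √(θ ^ 2 - 1)) = 2 * arctan ((θ + 1) / √(θ ^ 2 - 1)) - π / 2 := by
    rw [← arctan_sq_sub_one_div_two_mul ((one_lt_div hb).mpr (by nlinarith))]
    congr 1
    field_simp
    rw [hbsq]
    ring
  rw [integral_zero_one_eq_integral_comp_sin hcont, hsin, integral_cos_div_sub_cos hθ, harctan]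
  field_simp
  ring
end

section
/- Let λ > 0, c ∈ ℝ, and let φ : (−1,1) → ℝ be twice continuously differentiable with φ(r) > 0 for all r ∈ (−1,1). Set w(r) = √(φ(r)² + λ²·φ′(r)²) and suppose φ satisfies the Euler–Lagrange equation c = φ(r)/w(r) − λ²·d/dr( φ′(r)/w(r) ) for all r ∈ (−1,1). Then the function ζ(r) = −λ·φ′(r)/w(r) is continuously differentiable on (−1,1) and satisfies λ·ζ′(r) = c − √(1 − ζ(r)²) for all r ∈ (−1,1). Moreover 1 − ζ(r)² = φ(r)²/w(r)² for all r ∈ (−1,1). -/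
/-!
Since `w² = φ² + (λφ')²`, the pair `(φ/w, ζ)` lies on the unit circle, and `φ > 0` picks
the branch `√(1 - ζ²) = φ/w`. As `λζ' = -λ²(φ'/w)'`, the Euler–Lagrange equation is then
exactly `λζ' = c - √(1 - ζ²)`.
-/

open Set

theorem one_sub_div_sq_of_sq_eq_add {a b w : ℝ} (hw : w ^ 2 = a ^ 2 + b ^ 2) (hw0 : w ≠ 0) :
    1 - (b / w) ^ 2 = a ^ 2 / w ^ 2 := by
  field_simp
  linarith

theorem sqrt_one_sub_div_sq_of_sq_eq_add {a b w : ℝ} (hw : w ^ 2 = a ^ 2 + b ^ 2) (ha : 0 ≤ a)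
    (hw0 : 0 < w) : √(1 - (b / w) ^ 2) = a / w := by
  rw [one_sub_div_sq_of_sq_eq_add hw hw0.ne', ← div_pow, Real.sqrt_sq (by positivity)]

theorem ContDiffOn.sqrt_sq_add_mul_sq_deriv {φ : ℝ → ℝ} {s : Set ℝ} {n : WithTop ℕ∞}
    (k : ℝ) (hφ : ContDiffOn ℝ (n + 1) φ s) (hs : IsOpen s)
    (hrad : ∀ r ∈ s, 0 < φ r ^ 2 + k * deriv φ r ^ 2) :
    ContDiffOn ℝ n (fun r => √(φ r ^ 2 + k * deriv φ r ^ 2)) s :=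
  ((hφ.of_le le_self_add).pow 2 |>.add
    (contDiffOn_const.mul ((hφ.deriv_of_isOpen hs le_rfl).pow 2))).sqrt
    fun r hr => (hrad r hr).ne'

theorem euler_lagrange_to_first_order_general (lam c : ℝ)
    (φ w ζ : ℝ → ℝ)
    (hφ : ContDiffOn ℝ 2 φ (Set.Ioo (-1) 1))
    (hpos : ∀ r ∈ Set.Ioo (-1 : ℝ) 1, 0 < φ r)
    (hw : ∀ r, w r = Real.sqrt ((φ r) ^ 2 + lam ^ 2 * (deriv φ r) ^ 2))
    (hζ : ∀ r, ζ r = -lam * deriv φ r / w r)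
    (hEL : ∀ r ∈ Set.Ioo (-1 : ℝ) 1,
      c = φ r / w r - lam ^ 2 * deriv (fun s => deriv φ s / w s) r) :
    ContDiffOn ℝ 1 ζ (Set.Ioo (-1) 1) ∧
    (∀ r ∈ Set.Ioo (-1 : ℝ) 1,
      lam * deriv ζ r = c - Real.sqrt (1 - (ζ r) ^ 2)) ∧
    (∀ r ∈ Set.Ioo (-1 : ℝ) 1, 1 - (ζ r) ^ 2 = (φ r) ^ 2 / (w r) ^ 2) := by
  have hrad : ∀ r ∈ Ioo (-1 : ℝ) 1, 0 < φ r ^ 2 + lam ^ 2 * deriv φ r ^ 2 := fun r hr => by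
    have := hpos r hr
    positivity
  have hwpos : ∀ r ∈ Ioo (-1 : ℝ) 1, 0 < w r := fun r hr =>
    hw r ▸ Real.sqrt_pos.mpr (hrad r hr)
  have hwsq : ∀ r, w r ^ 2 = φ r ^ 2 + (-lam * deriv φ r) ^ 2 := fun r => by
    rw [hw r, Real.sq_sqrt (by positivity)]
    ring
  have hζq : ζ = fun t => -lam * (deriv φ t / w t) :=
    funext fun t => by rw [hζ t, mul_div_assoc]
  have hwC : ContDiffOn ℝ 1 w (Ioo (-1) 1) :=
    (hφ.sqrt_sq_add_mul_sq_deriv (lam ^ 2) isOpen_Ioo hrad).congr fun r _ => hw r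
  refine ⟨?_, fun r hr => ?_, fun r hr => ?_⟩
  · exact ((contDiffOn_const.mul (hφ.deriv_of_isOpen isOpen_Ioo le_rfl)).div hwC
      fun r hr => (hwpos r hr).ne').congr fun r _ => hζ r
  · rw [hζ r, sqrt_one_sub_div_sq_of_sq_eq_add (hwsq r) (hpos r hr).le (hwpos r hr), hζq,
      deriv_const_mul_field]
    linarith [hEL r hr]
  · rw [hζ r]
    exact one_sub_div_sq_of_sq_eq_add (hwsq r) (hwpos r hr).ne'

/-- Reduction of the Euler–Lagrange equation to a first-order ODE (proof of Theorem 3.2):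
if `φ > 0` is C² on `(−1,1)`, `w = √(φ² + λ²·(φ')²)`, and
`c = φ/w − λ²·(φ'/w)'` on `(−1,1)`, then `ζ = −λ·φ'/w` is C¹ on `(−1,1)`,
satisfies `λ·ζ' = c − √(1 − ζ²)` there, and `1 − ζ² = φ²/w²`. -/
theorem euler_lagrange_to_first_order (lam c : ℝ) (hlam : 0 < lam)
    (φ w ζ : ℝ → ℝ)
    (hφ : ContDiffOn ℝ 2 φ (Set.Ioo (-1) 1))
    (hpos : ∀ r ∈ Set.Ioo (-1 : ℝ) 1, 0 < φ r)
    (hw : ∀ r, w r = Real.sqrt ((φ r) ^ 2 + lam ^ 2 * (deriv φ r) ^ 2))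
    (hζ : ∀ r, ζ r = -lam * deriv φ r / w r)
    (hEL : ∀ r ∈ Set.Ioo (-1 : ℝ) 1,
      c = φ r / w r - lam ^ 2 * deriv (fun s => deriv φ s / w s) r) :
    ContDiffOn ℝ 1 ζ (Set.Ioo (-1) 1) ∧
    (∀ r ∈ Set.Ioo (-1 : ℝ) 1,
      lam * deriv ζ r = c - Real.sqrt (1 - (ζ r) ^ 2)) ∧
    (∀ r ∈ Set.Ioo (-1 : ℝ) 1, 1 - (ζ r) ^ 2 = (φ r) ^ 2 / (w r) ^ 2) :=
  euler_lagrange_to_first_order_general lam c φ w ζ hφ hpos hw hζ hEL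
end

section
/- For λ > 0 let θ̂_Y(λ) denote the infimum of Ψ_λ(φ) = ∫_{−1}^{1} √(φ(r)² + λ²·φ′(r)²) dr over all continuously differentiable functions φ : [−1,1] → ℝ with φ(−1) = φ(1) = 0 and ∫_{−1}^{1} φ(r) dr = 1. Then θ̂_Y(λ) > 1 for every λ > 0. -/
/-!
Calibration: with `s = √(1 + λ²)`, the pair `(1/s, -λr/s)` has Euclidean norm at most `1` on
`[-1, 1]`, so by Cauchy–Schwarz `(φ - λ² r φ') / s ≤ √(φ² + λ²φ'²)` pointwise. Integrating, and
using `∫ r φ' = -∫ φ = -1` (integration by parts against the boundary conditions), gives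
`Ψ_λ(φ) ≥ (1 + λ²) / s = √(1 + λ²)`, which exceeds `1` as soon as `λ ≠ 0`.
-/

open intervalIntegral

lemma mul_add_mul_le_sqrt_sq_add_sq {a b : ℝ} (hab : a ^ 2 + b ^ 2 ≤ 1) (x y : ℝ) :
    a * x + b * y ≤ Real.sqrt (x ^ 2 + y ^ 2) :=
  (le_abs_self _).trans <| Real.abs_le_sqrt <| by
    nlinarith [sq_nonneg (a * y - b * x), sq_nonneg x, sq_nonneg y]

lemma integral_id_mul_deriv_eq_neg_integral {φ : ℝ → ℝ} {a b : ℝ} (hφ : ContDiff ℝ 1 φ)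
    (ha : φ a = 0) (hb : φ b = 0) :
    ∫ r in a..b, r * deriv φ r = -∫ r in a..b, φ r := by
  have hdφ : Continuous (deriv φ) := hφ.continuous_deriv le_rfl
  rw [integral_mul_deriv_eq_deriv_mul (u := fun r => r) (u' := fun _ => 1)
    (fun x _ => hasDerivAt_id' x)
    (fun x _ => (hφ.differentiable one_ne_zero x).hasDerivAt) intervalIntegrable_const
    (hdφ.intervalIntegrable _ _)]
  simp [ha, hb]

lemma sqrt_one_add_sq_le_Psi (lam : ℝ) {φ : ℝ → ℝ} (hφ : ContDiff ℝ 1 φ) (hm1 : φ (-1) = 0)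
    (hp1 : φ 1 = 0) (hint : ∫ r in (-1 : ℝ)..1, φ r = 1) :
    Real.sqrt (1 + lam ^ 2) ≤ Psi lam φ := by
  have hc : Continuous φ := hφ.continuous
  have hdc : Continuous (deriv φ) := hφ.continuous_deriv le_rfl
  set s := Real.sqrt (1 + lam ^ 2)
  have hs_sq : s ^ 2 = 1 + lam ^ 2 := Real.sq_sqrt (by positivity)
  have hs_pos : 0 < s := Real.sqrt_pos.mpr (by positivity)
  have hpointwise : ∀ r ∈ Set.Icc (-1 : ℝ) 1,
      (φ r - lam ^ 2 * (r * deriv φ r)) / s ≤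
        Real.sqrt (φ r ^ 2 + lam ^ 2 * deriv φ r ^ 2) := by
    intro r ⟨hr₁, hr₂⟩
    have hcal : (1 / s) ^ 2 + (-(lam * r) / s) ^ 2 ≤ 1 := by
      rw [div_pow, div_pow, ← add_div, div_le_one (by positivity), hs_sq]
      have hr : r ^ 2 ≤ 1 := by nlinarith
      nlinarith [mul_le_mul_of_nonneg_left hr (sq_nonneg lam)]
    have h := mul_add_mul_le_sqrt_sq_add_sq hcal (φ r) (lam * deriv φ r)
    rw [mul_pow] at h
    convert h using 1
    ring
  have hibp : ∫ r in (-1 : ℝ)..1, r * deriv φ r = -1 := by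
    rw [integral_id_mul_deriv_eq_neg_integral hφ hm1 hp1, hint]
  calc s = ((∫ r in (-1 : ℝ)..1, φ r) - lam ^ 2 * ∫ r in (-1 : ℝ)..1, r * deriv φ r) / s := by
        rw [hint, hibp, eq_div_iff hs_pos.ne', ← sq, hs_sq]; ring
    _ = ∫ r in (-1 : ℝ)..1, (φ r - lam ^ 2 * (r * deriv φ r)) / s := by
        rw [integral_div, integral_sub (hc.intervalIntegrable _ _)
          ((by fun_prop : Continuous fun r => lam ^ 2 * (r * deriv φ r)).intervalIntegrable _ _),
          integral_const_mul]
    _ ≤ Psi lam φ :=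
        integral_mono_on (by norm_num) ((by fun_prop : Continuous _).intervalIntegrable _ _)
          ((by fun_prop : Continuous _).intervalIntegrable _ _) hpointwise

lemma exists_admissible :
    ∃ φ : ℝ → ℝ, ContDiff ℝ 1 φ ∧ φ (-1) = 0 ∧ φ 1 = 0 ∧ ∫ r in (-1 : ℝ)..1, φ r = 1 := by
  refine ⟨fun r => 3 / 4 * (1 - r ^ 2), by fun_prop, by norm_num, by norm_num, ?_⟩
  rw [integral_const_mul, integral_sub intervalIntegrable_const
    ((continuous_pow 2).intervalIntegrable _ _), integral_pow]
  norm_num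

lemma sqrt_one_add_sq_le_thetaY (lam : ℝ) : Real.sqrt (1 + lam ^ 2) ≤ thetaY lam := by
  obtain ⟨φ, hφ, hm1, hp1, hint⟩ := exists_admissible
  refine le_csInf ⟨_, φ, hφ, hm1, hp1, hint, rfl⟩ ?_
  rintro _ ⟨ψ, hψ, hm1, hp1, hint, rfl⟩
  exact sqrt_one_add_sq_le_Psi lam hψ hm1 hp1 hint

/-- The renormalized yield shear stress strictly exceeds 1 for every `λ > 0`
(equation (31) of the paper). -/
theorem thetaY_gt_one (lam : ℝ) (hlam : 0 < lam) : 1 < thetaY lam := by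
  refine lt_of_lt_of_le ?_ (sqrt_one_add_sq_le_thetaY lam)
  rw [Real.lt_sqrt zero_le_one]
  nlinarith
end
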